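/- Let r = 3 and 2βμ ≥ 1. Along the weak solution u of the 3D CBF equations with f ∈ H, d/dt‖u(t)‖_V² + (μ - 1/(2β))‖Au(t)‖_H² + β‖∇|u|²‖_{L²}² ≤ (1/μ)‖f‖_H². -/

import Mathlib

open MeasureTheory Real
noncomputable section

/-- Euclidean 3-space, used both as the periodic box parametrization and target. -/
abbrev E3 := EuclideanSpace ℝ (Fin 3)

/-- The fundamental domain `[0,L]³` of the torus `T³`. -/
def box (L : ℝ) : Set E3 := {x | ∀ i, x i ∈ Set.Icc (0 : ℝ) L}

/-- The standard basis vector `e_i`. -/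
def e3 (i : Fin 3) : E3 := EuclideanSpace.single i 1

/-- `u` is `L`-periodic in each coordinate direction. -/
def Periodic3 (L : ℝ) {α : Type*} (u : E3 → α) : Prop :=
  ∀ (x : E3) (i : Fin 3), u (x + L • e3 i) = u x

/-- `|∇u|² = Σ_{i,j} (∂u_j/∂x_i)²`. -/
def gradNormSq (u : E3 → E3) (x : E3) : ℝ :=
  ∑ i, ∑ j, (fderiv ℝ u x (e3 i) j) ^ 2

/-- `|∇f|²` for a scalar function. -/
def gradNormSqScalar (f : E3 → ℝ) (x : E3) : ℝ :=
  ∑ i, (fderiv ℝ f x (e3 i)) ^ 2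

/-- `u` is divergence free. -/
def divFree (u : E3 → E3) : Prop := ∀ x, ∑ i, fderiv ℝ u x (e3 i) i = 0

/-- The Laplacian `Δu`. -/
def lap (u : E3 → E3) (x : E3) : E3 :=
  ∑ i, fderiv ℝ (fun y => fderiv ℝ u y (e3 i)) x (e3 i)

/-- The Navier–Stokes trilinear form `b(u,v,w) = ∫ (u·∇)v·w`. -/
def triB (L : ℝ) (u v w : E3 → E3) : ℝ :=
  ∫ x in box L, ∑ i, ∑ j, u x i * fderiv ℝ v x (e3 i) j * w x j

/-- The `L^p` norm over the fundamental domain (for a real exponent `p`). -/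
def LpNorm (L p : ℝ) (u : E3 → E3) : ℝ := (∫ x in box L, ‖u x‖ ^ p) ^ (1 / p)

/-- The square of the `V`-norm, `‖u‖_V² = ∫ |∇u|²`. -/
def VnormSq (L : ℝ) (u : E3 → E3) : ℝ := ∫ x in box L, gradNormSq u x

/-- The `V`-norm `‖u‖_V = ‖∇u‖_{L²}`. -/
def Vnorm (L : ℝ) (u : E3 → E3) : ℝ := Real.sqrt (VnormSq L u)

/-- `‖Au‖_H² = ∫ |Δu|²` (on the torus, for divergence-free `u`, `Au = -Δu`). -/
def AuSq (L : ℝ) (u : E3 → E3) : ℝ := ∫ x in box L, ‖lap u x‖ ^ 2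

/-- The convective term `((u·∇)u)_j`. -/
def conv (u : E3 → E3) (x : E3) (j : Fin 3) : ℝ := ∑ i, u x i * fderiv ℝ u x (e3 i) j

/-- The pairing `(B(u), Au) = ∫ (u·∇)u · (-Δu)`. -/
def pairBA (L : ℝ) (u : E3 → E3) : ℝ :=
  ∫ x in box L, ∑ j, conv u x j * (-(lap u x)) j

/-- The pairing `(C(u), Au) = ∫ |u|^{r-1}u · (-Δu)`. -/
def pairCA (L r : ℝ) (u : E3 → E3) : ℝ :=
  ∫ x in box L, ∑ j, (‖u x‖ ^ (r - 1) * u x j) * (-(lap u x)) j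

/-- The pairing `(f, Au) = ∫ f · (-Δu)`. -/
def pairFA (L : ℝ) (f u : E3 → E3) : ℝ :=
  ∫ x in box L, ∑ j, f x j * (-(lap u x)) j

/-- `‖|∇u||u|^{(r-1)/2}‖_{L²}² = ∫ |∇u|²|u|^{r-1}`. -/
def I1 (L r : ℝ) (u : E3 → E3) : ℝ :=
  ∫ x in box L, gradNormSq u x * ‖u x‖ ^ (r - 1)

/-- `‖∇(|u|^{(r+1)/2})‖_{L²}²`. -/
def I2 (L r : ℝ) (u : E3 → E3) : ℝ :=
  ∫ x in box L, gradNormSqScalar (fun y => ‖u y‖ ^ ((r + 1) / 2)) x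

/-- `‖f‖_H² = ∫ |f|²`. -/
def HSq (L : ℝ) (f : E3 → E3) : ℝ := ∫ x in box L, ‖f x‖ ^ 2

/-!
Pairing the equation with `Au` gives the energy identity `hder`. For `r = 3` the damping term is
computed by a periodic integration by parts: the divergence of the flux `|u|² ∂ᵢ|u|²` is
`|∇|u|²|² + 2|u|²(|∇u|² + u · Δu)`, and its integral over the box vanishes because, by periodicity,
the opposite faces cancel, so `(C(u), Au) = ‖|∇u||u|‖² + ½‖∇|u|²‖²`. Young's inequality
`ab ≤ βa² + b²/(4β)` bounds the convective term by `β‖|∇u||u|‖² + ‖Au‖²/(4β)`, whose first part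
is cancelled exactly by the damping, and `ab ≤ a²/(2μ) + μb²/2` bounds the forcing term.
-/

open scoped InnerProductSpace

theorem mul_le_mul_sq_add_mul_sq {a b c d : ℝ} (hc : 0 ≤ c) (hcd : 1 ≤ 4 * c * d) :
    a * b ≤ c * a ^ 2 + d * b ^ 2 := by
  have hc' : 0 < c := hc.lt_of_ne (by rintro rfl; linarith)
  nlinarith [sq_nonneg (2 * c * a - b), mul_nonneg (sub_nonneg.2 hcd) (sq_nonneg b)]

theorem Finset.sum_mul_le_mul_sum_sq_add_mul_sum_sq {ι : Type*} (s : Finset ι) (a b : ι → ℝ)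
    {c d : ℝ} (hc : 0 ≤ c) (hcd : 1 ≤ 4 * c * d) :
    ∑ i ∈ s, a i * b i ≤ c * ∑ i ∈ s, a i ^ 2 + d * ∑ i ∈ s, b i ^ 2 := by
  rw [Finset.mul_sum, Finset.mul_sum, ← Finset.sum_add_distrib]
  exact Finset.sum_le_sum fun i _ => mul_le_mul_sq_add_mul_sq hc hcd

theorem EuclideanSpace.real_inner_eq_sum {ι : Type*} [Fintype ι] (a b : EuclideanSpace ℝ ι) :
    ⟪a, b⟫_ℝ = ∑ j, a j * b j := by
  rw [PiLp.inner_apply]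
  exact Finset.sum_congr rfl fun j _ => Real.inner_apply _ _

theorem rpow_three_sub_one (a : ℝ) : a ^ ((3 : ℝ) - 1) = a ^ 2 := by
  rw [show (3 : ℝ) - 1 = (2 : ℕ) by norm_num, Real.rpow_natCast]

section Calculus

variable {E F : Type*} [NormedAddCommGroup E] [NormedSpace ℝ E]
  [NormedAddCommGroup F] [InnerProductSpace ℝ F]

theorem fderiv_mul_apply {f g : E → ℝ} {x : E} (hf : DifferentiableAt ℝ f x)
    (hg : DifferentiableAt ℝ g x) (v : E) :
    fderiv ℝ (fun y => f y * g y) x v = fderiv ℝ f x v * g x + f x * fderiv ℝ g x v := by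
  simp [fderiv_fun_mul hf hg]
  ring

theorem fderiv_normSq_apply {u : E → F} {x : E} (hu : DifferentiableAt ℝ u x) (v : E) :
    fderiv ℝ (fun y => ‖u y‖ ^ 2) x v = 2 * ⟪u x, fderiv ℝ u x v⟫_ℝ := by
  simp [hu.hasFDerivAt.norm_sq.fderiv]

theorem fderiv_fderiv_normSq_apply {u : E → F} (hu : ContDiff ℝ 2 u) (x v : E) :
    fderiv ℝ (fun y => fderiv ℝ (fun z => ‖u z‖ ^ 2) y v) x v
      = 2 * (‖fderiv ℝ u x v‖ ^ 2 + ⟪u x, fderiv ℝ (fun y => fderiv ℝ u y v) x v⟫_ℝ) := by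
  have hu1 : Differentiable ℝ u := hu.differentiable two_ne_zero
  have hdu : Differentiable ℝ (fun y => fderiv ℝ u y v) :=
    ((hu.fderiv_right (m := 1) le_rfl).differentiable one_ne_zero).clm_apply
      (differentiable_const v)
  simp only [fderiv_normSq_apply (hu1 _)]
  rw [fderiv_const_mul ((hu1 x).inner ℝ (hdu x)), _root_.smul_apply,
    fderiv_inner_apply ℝ (hu1 x) (hdu x), real_inner_self_eq_norm_sq, smul_eq_mul]
  ring

end Calculus

section Torus

theorem Periodic3.fderiv {L : ℝ} {F : Type*} [NormedAddCommGroup F] [NormedSpace ℝ F]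
    {g : E3 → F} (hg : Periodic3 L g) : Periodic3 L (fderiv ℝ g) := by
  intro x i
  rw [← fderiv_comp_add_right]
  exact congrArg (_root_.fderiv ℝ · x) (funext fun y => hg y i)

theorem toLp_preimage_box (L : ℝ) :
    WithLp.toLp 2 ⁻¹' box L = Set.Icc (0 : Fin 3 → ℝ) (fun _ => L) := by
  ext y
  simp [box, Set.mem_Icc, Pi.le_def, forall_and]

theorem isCompact_box (L : ℝ) : IsCompact (box L) := by
  have hbox : box L = WithLp.ofLp ⁻¹' Set.Icc (0 : Fin 3 → ℝ) (fun _ => L) := by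
    ext y
    simp [box, Set.mem_Icc, Pi.le_def, forall_and]
  rw [hbox]
  exact (EuclideanSpace.equiv (Fin 3) ℝ).toHomeomorph.isCompact_preimage.mpr isCompact_Icc

theorem measurableSet_box (L : ℝ) : MeasurableSet (box L) :=
  (isCompact_box L).isClosed.measurableSet

theorem Continuous.integrableOn_box {L : ℝ} {g : E3 → ℝ} (hg : Continuous g) :
    IntegrableOn g (box L) :=
  hg.continuousOn.integrableOn_compact (isCompact_box L)

theorem setIntegral_box_le {L : ℝ} {g h₁ h₂ : E3 → ℝ} (hg : Continuous g)
    (hh₁ : Continuous h₁) (hh₂ : Continuous h₂) {a b : ℝ}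
    (hle : ∀ x, g x ≤ a * h₁ x + b * h₂ x) :
    ∫ x in box L, g x ≤ a * (∫ x in box L, h₁ x) + b * ∫ x in box L, h₂ x := by
  rw [← integral_const_mul, ← integral_const_mul,
    ← integral_add (hh₁.const_mul a).integrableOn_box (hh₂.const_mul b).integrableOn_box]
  exact setIntegral_mono_on hg.integrableOn_box
    ((hh₁.const_mul a).add (hh₂.const_mul b)).integrableOn_box (measurableSet_box L)
    fun x _ => hle x

theorem setIntegral_box_eq_setIntegral_Icc (L : ℝ) (g : E3 → ℝ) :
    ∫ x in box L, g x = ∫ y in Set.Icc (0 : Fin 3 → ℝ) (fun _ => L), g (WithLp.toLp 2 y) := by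
  rw [← toLp_preimage_box]
  exact ((PiLp.volume_preserving_toLp (Fin 3)).setIntegral_preimage_emb
    (MeasurableEquiv.toLp 2 (Fin 3 → ℝ)).measurableEmbedding g (box L)).symm

theorem toLp_insertNth_eq_add (L : ℝ) (i : Fin 3) (z : Fin 2 → ℝ) :
    WithLp.toLp 2 (i.insertNth L z) = WithLp.toLp 2 (i.insertNth 0 z) + L • e3 i := by
  ext j
  rcases eq_or_ne j i with rfl | hj
  · simp [e3]
  · obtain ⟨k, rfl⟩ := Fin.exists_succAbove_eq hj
    simp [e3, hj]

theorem integral_box_sum_fderiv_eq_zero_of_periodic {L : ℝ} (hL : 0 ≤ L)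
    {φ : Fin 3 → E3 → ℝ} (hφ : ∀ i, ContDiff ℝ 1 (φ i)) (hper : ∀ i, Periodic3 L (φ i)) :
    ∫ x in box L, ∑ i, fderiv ℝ (φ i) x (e3 i) = 0 := by
  let toLpCLM : (Fin 3 → ℝ) →L[ℝ] E3 := (EuclideanSpace.equiv (Fin 3) ℝ).symm
  have hdiv := integral_divergence_of_hasFDerivAt_off_countable'
    (a := (0 : Fin 3 → ℝ)) (b := fun _ => L) (fun _ => hL)
    (fun i y => φ i (WithLp.toLp 2 y))
    (fun i y => (fderiv ℝ (φ i) (WithLp.toLp 2 y)).comp toLpCLM)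
    ∅ Set.countable_empty
    (fun i => ((hφ i).continuous.comp (PiLp.continuous_toLp 2 _)).continuousOn)
    (fun y _ i => ((hφ i).differentiable one_ne_zero _).hasFDerivAt.comp y
      toLpCLM.hasFDerivAt)
    (Continuous.integrableOn_Icc (continuous_finsetSum _ fun i _ =>
      (((hφ i).continuous_fderiv one_ne_zero).comp (PiLp.continuous_toLp 2 _)).clm_apply
        continuous_const))
  rw [setIntegral_box_eq_setIntegral_Icc]
  refine hdiv.trans (Finset.sum_eq_zero fun i _ => sub_eq_zero.2 ?_)
  simp only [toLp_insertNth_eq_add L i, hper i _ i]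
  rfl

end Torus

section VectorFields

variable {L : ℝ} {u : E3 → E3}

theorem gradNormSq_eq_sum_norm_sq (x : E3) :
    gradNormSq u x = ∑ i, ‖fderiv ℝ u x (e3 i)‖ ^ 2 := by
  simp [gradNormSq, EuclideanSpace.real_norm_sq_eq]

theorem continuous_gradNormSq (hu : ContDiff ℝ 1 u) : Continuous (gradNormSq u) :=
  continuous_finsetSum _ fun _ _ => continuous_finsetSum _ fun j _ =>
    (((EuclideanSpace.proj j : E3 →L[ℝ] ℝ).continuous.comp
      ((hu.continuous_fderiv one_ne_zero).clm_apply continuous_const))).pow 2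

theorem continuous_gradNormSqScalar {g : E3 → ℝ} (hg : ContDiff ℝ 1 g) :
    Continuous (gradNormSqScalar g) :=
  continuous_finsetSum _ fun _ _ =>
    ((hg.continuous_fderiv one_ne_zero).clm_apply continuous_const).pow 2

theorem continuous_lap (hu : ContDiff ℝ 2 u) : Continuous (lap u) :=
  continuous_finsetSum _ fun _ _ =>
    ((((hu.fderiv_right (m := 1) le_rfl).clm_apply contDiff_const).continuous_fderiv
      one_ne_zero).clm_apply continuous_const)

theorem continuous_conv (hu : ContDiff ℝ 1 u) (j : Fin 3) :
    Continuous fun x => conv u x j := by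
  have hu' := hu.continuous
  have hdu := hu.continuous_fderiv one_ne_zero
  unfold conv
  fun_prop

theorem sum_conv_sq_le (x : E3) : ∑ j, conv u x j ^ 2 ≤ gradNormSq u x * ‖u x‖ ^ 2 :=
  calc ∑ j, conv u x j ^ 2
      ≤ ∑ j, (∑ i, u x i ^ 2) * ∑ i, fderiv ℝ u x (e3 i) j ^ 2 :=
        Finset.sum_le_sum fun j _ => Finset.sum_mul_sq_le_sq_mul_sq _ _ _
    _ = gradNormSq u x * ‖u x‖ ^ 2 := by
        rw [← Finset.mul_sum, Finset.sum_comm, EuclideanSpace.real_norm_sq_eq, mul_comm]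
        rfl

def normSqFlux (u : E3 → E3) (i : Fin 3) (x : E3) : ℝ :=
  ‖u x‖ ^ 2 * fderiv ℝ (fun y => ‖u y‖ ^ 2) x (e3 i)

theorem contDiff_normSqFlux (hu : ContDiff ℝ 2 u) (i : Fin 3) :
    ContDiff ℝ 1 (normSqFlux u i) :=
  (hu.norm_sq ℝ).of_le (by norm_num) |>.mul
    ((hu.norm_sq ℝ).fderiv_right (m := 1) le_rfl |>.clm_apply contDiff_const)

theorem Periodic3.normSqFlux (hu : Periodic3 L u) (i : Fin 3) :
    Periodic3 L (normSqFlux u i) := by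
  have hq : Periodic3 L (fun y => ‖u y‖ ^ 2) := fun x k => by simp only [hu x k]
  intro x k
  simp only [_root_.normSqFlux, hq x k, hq.fderiv x k]

theorem sum_fderiv_normSqFlux (hu : ContDiff ℝ 2 u) (x : E3) :
    ∑ i, fderiv ℝ (normSqFlux u i) x (e3 i)
      = gradNormSqScalar (fun y => ‖u y‖ ^ 2) x
        + 2 * ‖u x‖ ^ 2 * (gradNormSq u x + ⟪u x, lap u x⟫_ℝ) := by
  have hq : ContDiff ℝ 2 (fun y => ‖u y‖ ^ 2) := hu.norm_sq ℝ
  have hterm : ∀ i, fderiv ℝ (normSqFlux u i) x (e3 i)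
      = fderiv ℝ (fun y => ‖u y‖ ^ 2) x (e3 i) ^ 2
        + 2 * ‖u x‖ ^ 2 * (‖fderiv ℝ u x (e3 i)‖ ^ 2
          + ⟪u x, fderiv ℝ (fun y => fderiv ℝ u y (e3 i)) x (e3 i)⟫_ℝ) := fun i => by
    unfold normSqFlux
    rw [fderiv_mul_apply (hq.differentiable two_ne_zero x)
      (((hq.fderiv_right (m := 1) le_rfl).clm_apply contDiff_const).differentiable
        one_ne_zero x), fderiv_fderiv_normSq_apply hu]
    ring
  simp only [hterm, Finset.sum_add_distrib, ← Finset.mul_sum, gradNormSqScalar,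
    gradNormSq_eq_sum_norm_sq, lap, inner_sum]

theorem pairCA_three_eq (hL : 0 ≤ L) (hu : ContDiff ℝ 2 u) (hper : Periodic3 L u) :
    pairCA L 3 u
      = I1 L 3 u + 1 / 2 * ∫ x in box L, gradNormSqScalar (fun y => ‖u y‖ ^ 2) x := by
  have hflux := integral_box_sum_fderiv_eq_zero_of_periodic hL (contDiff_normSqFlux hu)
    hper.normSqFlux
  have hq : ContDiff ℝ 2 (fun y => ‖u y‖ ^ 2) := hu.norm_sq ℝ
  have hI1 : Continuous fun x => gradNormSq u x * ‖u x‖ ^ 2 :=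
    (continuous_gradNormSq (hu.of_le one_le_two)).mul hq.continuous
  have hG : Continuous (gradNormSqScalar (fun y => ‖u y‖ ^ 2)) :=
    continuous_gradNormSqScalar (hq.of_le one_le_two)
  have hleft : Continuous fun x =>
      gradNormSq u x * ‖u x‖ ^ 2 + 1 / 2 * gradNormSqScalar (fun y => ‖u y‖ ^ 2) x :=
    hI1.add (hG.const_mul _)
  have hdiv : Continuous fun x => ∑ i, fderiv ℝ (normSqFlux u i) x (e3 i) :=
    continuous_finsetSum _ fun i _ =>
      ((contDiff_normSqFlux hu i).continuous_fderiv one_ne_zero).clm_apply continuous_const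
  have hpoint : ∀ x, ∑ j, (‖u x‖ ^ ((3 : ℝ) - 1) * u x j) * (-(lap u x)) j
      = gradNormSq u x * ‖u x‖ ^ 2 + 1 / 2 * gradNormSqScalar (fun y => ‖u y‖ ^ 2) x
        - 1 / 2 * ∑ i, fderiv ℝ (normSqFlux u i) x (e3 i) := fun x => by
    rw [sum_fderiv_normSqFlux hu, EuclideanSpace.real_inner_eq_sum, rpow_three_sub_one]
    simp only [WithLp.ofLp_neg, Pi.neg_apply, mul_neg, Finset.sum_neg_distrib, mul_assoc,
      ← Finset.mul_sum]
    ring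
  rw [pairCA, integral_congr_ae (Filter.Eventually.of_forall hpoint),
    integral_sub hleft.integrableOn_box (hdiv.const_mul _).integrableOn_box,
    integral_add hI1.integrableOn_box (hG.const_mul _).integrableOn_box,
    integral_const_mul, integral_const_mul, hflux, I1]
  simp only [rpow_three_sub_one]
  ring

theorem neg_pairBA_le (hu : ContDiff ℝ 2 u) {β : ℝ} (hβ : 0 < β) :
    -pairBA L u ≤ β * I1 L 3 u + 1 / (4 * β) * AuSq L u := by
  have hpoint : ∀ x, -∑ j, conv u x j * (-(lap u x)) j
      ≤ β * (gradNormSq u x * ‖u x‖ ^ ((3 : ℝ) - 1)) + 1 / (4 * β) * ‖lap u x‖ ^ 2 := by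
    intro x
    have hyoung := Finset.sum_mul_le_mul_sum_sq_add_mul_sum_sq Finset.univ (conv u x)
      (fun j => lap u x j) (d := 1 / (4 * β)) hβ.le (by field_simp; rfl)
    rw [rpow_three_sub_one, EuclideanSpace.real_norm_sq_eq (lap u x)]
    simp only [WithLp.ofLp_neg, Pi.neg_apply, mul_neg, Finset.sum_neg_distrib, neg_neg]
    nlinarith [sum_conv_sq_le (u := u) x]
  rw [pairBA, ← integral_neg]
  exact setIntegral_box_le
    (continuous_finsetSum _ fun j _ => (continuous_conv (hu.of_le one_le_two) j).mul
      ((EuclideanSpace.proj j : E3 →L[ℝ] ℝ).continuous.comp (continuous_lap hu).neg)).neg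
    ((continuous_gradNormSq (hu.of_le one_le_two)).mul
      (hu.continuous.norm.rpow_const fun _ => Or.inr (by norm_num)))
    ((continuous_lap hu).norm.pow 2) hpoint

theorem pairFA_le (hu : ContDiff ℝ 2 u) {f : E3 → E3} (hf : Continuous f) {μ : ℝ}
    (hμ : 0 < μ) : pairFA L f u ≤ 1 / (2 * μ) * HSq L f + μ / 2 * AuSq L u := by
  have hpoint : ∀ x, ∑ j, f x j * (-(lap u x)) j
      ≤ 1 / (2 * μ) * ‖f x‖ ^ 2 + μ / 2 * ‖lap u x‖ ^ 2 := by
    intro x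
    rw [EuclideanSpace.real_norm_sq_eq (f x), EuclideanSpace.real_norm_sq_eq (lap u x)]
    simpa only [WithLp.ofLp_neg, Pi.neg_apply, neg_sq] using
      Finset.sum_mul_le_mul_sum_sq_add_mul_sum_sq Finset.univ (fun j => f x j)
        (fun j => (-(lap u x)) j) (d := μ / 2) (by positivity) (by field_simp; norm_num)
  exact setIntegral_box_le
    (continuous_finsetSum _ fun j _ =>
      ((EuclideanSpace.proj j : E3 →L[ℝ] ℝ).continuous.comp hf).mul
        ((EuclideanSpace.proj j : E3 →L[ℝ] ℝ).continuous.comp (continuous_lap hu).neg))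
    (hf.norm.pow 2) ((continuous_lap hu).norm.pow 2) hpoint

end VectorFields

theorem stmt16_general (L β μ : ℝ) (hL : 0 < L) (hβ : 0 < β) (hμ : 0 < μ)
    (u : ℝ → E3 → E3) (f : E3 → E3)
    (hf : Continuous f)
    (hu : ∀ t, ContDiff ℝ (⊤ : ℕ∞) (u t))
    (hup : ∀ t, Periodic3 L (u t))
    (hder : ∀ t : ℝ, HasDerivAt (fun s => VnormSq L (u s))
      (2 * (pairFA L f (u t) - μ * AuSq L (u t) - pairBA L (u t)
        - β * pairCA L 3 (u t))) t) :
    ∀ t : ℝ, ∃ d : ℝ, HasDerivAt (fun s => VnormSq L (u s)) d t ∧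
      d + (μ - 1 / (2 * β)) * AuSq L (u t)
          + β * (∫ x in box L, gradNormSqScalar (fun y => ‖u t y‖ ^ 2) x)
        ≤ (1 / μ) * HSq L f := by
  intro t
  have hu2 : ContDiff ℝ 2 (u t) := (hu t).of_le (WithTop.coe_le_coe.2 le_top)
  have hF := pairFA_le (L := L) hu2 hf hμ
  have hB := neg_pairBA_le (L := L) hu2 hβ
  refine ⟨_, hder t, ?_⟩
  rw [pairCA_three_eq hL.le hu2 (hup t)]
  linear_combination 2 * hF + 2 * hB

/-- For `r = 3` with `2βμ ≥ 1`, along the weak solution `u` of the 3D CBF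
equations with `f ∈ H` (taking the `H`-inner product of the equation with `Au` gives
`(1/2) d/dt‖u‖_V² = (f,Au) - μ‖Au‖_H² - (B(u),Au) - β(C(u),Au)`), one has
`d/dt‖u(t)‖_V² + (μ - 1/(2β))‖Au‖_H² + β‖∇|u|²‖_{L²}² ≤ (1/μ)‖f‖_H²`. -/
theorem stmt16 (L β μ : ℝ) (hL : 0 < L) (hβ : 0 < β) (hμ : 0 < μ)
    (hcrit : 1 ≤ 2 * β * μ)
    (u : ℝ → E3 → E3) (f : E3 → E3)
    (hf : Continuous f) (hfp : Periodic3 L f)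
    (hu : ∀ t, ContDiff ℝ (⊤ : ℕ∞) (u t))
    (hup : ∀ t, Periodic3 L (u t))
    (hud : ∀ t, divFree (u t))
    (hder : ∀ t : ℝ, HasDerivAt (fun s => VnormSq L (u s))
      (2 * (pairFA L f (u t) - μ * AuSq L (u t) - pairBA L (u t)
        - β * pairCA L 3 (u t))) t) :
    ∀ t : ℝ, ∃ d : ℝ, HasDerivAt (fun s => VnormSq L (u s)) d t ∧
      d + (μ - 1 / (2 * β)) * AuSq L (u t)
          + β * (∫ x in box L, gradNormSqScalar (fun y => ‖u t y‖ ^ 2) x)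
        ≤ (1 / μ) * HSq L f :=
  stmt16_general L β μ hL hβ hμ u f hf hu hup hder
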